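/- Let $g, \tilde{g}$ be two independent families of standard complex Gaussians indexed by $\mathbb{Z}^d$, and for $\varphi \in [0, \pi/2]$ set $g_n(\varphi) = \sin(\varphi) g_n + \cos(\varphi) \tilde{g}_n$. Fix $n_J = (n_1, \dots, n_k) \in (\mathbb{Z}^d)^k$ and signs $\iota_J \in \{\pm 1\}^k$, and let $\mathcal{L}(g_{n_J}^{\iota_J}(\varphi)) = \prod_{n} \mathcal{L}(\sigma_{n_J}(n), \mu_{\iota_J}(n), g_n(\varphi))$ be the Laguerre-type renormalized product. Then $\partial_\varphi \mathcal{L}(g_{n_J}^{\iota_J}(\varphi)) = \sum_{j \in J} \partial_\varphi[g_{n_j}^{\iota_j}(\varphi)] \, \mathcal{L}(g_{n_{J \setminus j}}^{\iota_{J \setminus j}}(\varphi))$. -/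

import Mathlib

/-- Generalized Laguerre polynomials `L_m^α`. -/
noncomputable def lag (a : ℝ) : ℕ → Polynomial ℝ
  | 0 => 1
  | 1 => Polynomial.C (1 + a) - Polynomial.X
  | (m + 2) => Polynomial.C (((m : ℝ) + 2)⁻¹) *
      ((Polynomial.C (2 * (m : ℝ) + 3 + a) - Polynomial.X) * lag a (m + 1)
        - Polynomial.C ((m : ℝ) + 1 + a) * lag a m)

/-- `z^m` for integer `m`, interpreting negative powers as powers of the conjugate;
this models `g^{+1} = g`, `g^{-1} = ḡ` and more generally `g^μ`. -/
noncomputable def cpow (m : ℤ) (z : ℂ) : ℂ :=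
  if 0 ≤ m then z ^ m.natAbs else (starRingEnd ℂ) z ^ m.natAbs

/-- The Laguerre-type renormalization
`𝓛(σ, μ, g) = (-1)^{(σ-|μ|)/2} ((σ-|μ|)/2)! L_{(σ-|μ|)/2}^{|μ|}(|g|²) g^μ`. -/
noncomputable def Lcal (s : ℕ) (m : ℤ) (z : ℂ) : ℂ :=
  (-1 : ℂ) ^ ((s - m.natAbs) / 2) * (Nat.factorial ((s - m.natAbs) / 2) : ℂ) *
    (((lag (m.natAbs : ℝ) ((s - m.natAbs) / 2)).eval (‖z‖ ^ 2) : ℝ) : ℂ) * cpow m z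

/-- The Laguerre-type renormalized product `𝓛(g_{n_J}^{ι_J})`:
`∏_n 𝓛(σ_{n_J}(n), μ_{ι_J}(n), g_n)` (all but finitely many factors equal `1`). -/
noncomputable def Lprod {V J : Type*} [Fintype J] [DecidableEq V]
    (nJ : J → V) (ι : J → ℤ) (g : V → ℂ) : ℂ :=
  ∏ n ∈ Finset.image nJ Finset.univ,
    Lcal (Finset.univ.filter fun j => nJ j = n).card
      (∑ j ∈ Finset.univ.filter fun j => nJ j = n, ι j) (g n)

/-!
Let `p` and `q` be the numbers of signs `+1` and `-1` sitting at one lattice point. For `q ≤ p`,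
`𝓛(p + q, p - q, z) = (-1)^q q! L_q^{p-q}(|z|²) z^{p-q}` is the complex Hermite polynomial
`H_{p,q}(z, z̄)` (for `p < q` it is the conjugate of `H_{q,p}`), whose Wirtinger derivatives are
`∂_z H_{p,q} = p H_{p-1,q}` and `∂_z̄ H_{p,q} = q H_{p,q-1}`; these are the Laguerre identities
`(L_m^α)' = -L_{m-1}^{α+1}` and `x (L_m^α)' + α L_m^α = (m + α) L_m^{α-1}`. Along a curve `f`,
the derivative of `𝓛(p + q, p - q, f)` is therefore `p f' 𝓛(p + q - 1, p - q - 1, f)` plus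
`q f̄' 𝓛(p + q - 1, p - q + 1, f)`: the sum, over the indices `j` at that point, of `(f')^{ι_j}`
times the factor with `j` removed. The Leibniz rule over the lattice points gives the theorem.
-/

open Polynomial ComplexConjugate

lemma lag_zero (a : ℝ) : lag a 0 = 1 := rfl

lemma lag_one (a : ℝ) : lag a 1 = C (1 + a) - X := rfl

lemma C_mul_lag_add_two (a : ℝ) (n : ℕ) :
    C ((n : ℝ) + 2) * lag a (n + 2)
      = (C (2 * (n : ℝ) + 3 + a) - X) * lag a (n + 1) - C ((n : ℝ) + 1 + a) * lag a n := by
  rw [lag, ← mul_assoc, ← C_mul, mul_inv_cancel₀ (by positivity), C_1, one_mul]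

lemma C_natCast_add_ne_zero (n : ℕ) {c : ℝ} (hc : 0 < c) : (C ((n : ℝ) + c) : ℝ[X]) ≠ 0 :=
  C_ne_zero.mpr (by positivity)

lemma X_mul_lag_add_one (a : ℝ) (n : ℕ) :
    X * lag (a + 1) n = C ((n : ℝ) + a + 1) * lag a n - C ((n : ℝ) + 1) * lag a (n + 1) := by
  induction n using Nat.strong_induction_on with
  | _ n ih =>
    match n, ih with
    | 0, _ =>
      simp only [zero_add, lag_zero, lag_one, Nat.cast_zero, map_add, map_one]
      ring
    | 1, _ =>
      have r := C_mul_lag_add_two a 0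
      simp only [zero_add, lag_zero, lag_one, map_add, map_one, map_ofNat, Nat.cast_zero,
        Nat.cast_one, mul_zero] at r ⊢
      linear_combination r
    | n + 2, ih =>
      have h1 := ih (n + 1) (by omega)
      have h0 := ih n (by omega)
      have r0 := C_mul_lag_add_two a n
      have r1 := C_mul_lag_add_two a (n + 1)
      have r0' := C_mul_lag_add_two (a + 1) n
      apply mul_left_cancel₀ (C_natCast_add_ne_zero n two_pos)
      push_cast at h1 h0 r0 r1 r0' ⊢
      simp only [map_add, map_mul, map_one, map_ofNat] at h1 h0 r0 r1 r0' ⊢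
      linear_combination X * r0' + (2 * C (n : ℝ) + 4 + C a - X) * h1
        - (C (n : ℝ) + 2 + C a) * h0 - (C (n : ℝ) + C a + 2) * r0 + (C (n : ℝ) + 2) * r1

lemma lag_add_one_eq_sub (a : ℝ) (n : ℕ) :
    lag a (n + 1) = lag (a + 1) (n + 1) - lag (a + 1) n := by
  induction n with
  | zero =>
    simp only [zero_add, lag_zero, lag_one, map_add, map_one]
    ring
  | succ n ih =>
    have r := C_mul_lag_add_two (a + 1) n
    have x := X_mul_lag_add_one a (n + 1)
    apply mul_left_cancel₀ (C_natCast_add_ne_zero n two_pos)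
    push_cast at r x ⊢
    simp only [map_add, map_mul, map_one, map_ofNat] at r x ⊢
    linear_combination x - r + (C (n : ℝ) + C a + 2) * ih

lemma derivative_lag_add_one (a : ℝ) (n : ℕ) : derivative (lag a (n + 1)) = -lag (a + 1) n := by
  induction n using Nat.strong_induction_on with
  | _ n ih =>
    match n, ih with
    | 0, _ => simp [lag_one, lag_zero]
    | 1, _ =>
      have hd := congrArg derivative (C_mul_lag_add_two a 0)
      simp only [CharP.cast_eq_zero, zero_add, derivative_mul, derivative_C, zero_mul, mul_zero,
        map_add, lag_one, map_one, lag_zero, mul_one, derivative_sub, add_zero,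
        derivative_X, zero_sub, neg_mul, one_mul, neg_sub, derivative_one, mul_neg, sub_zero,
        Nat.reduceAdd] at hd ⊢
      apply mul_left_cancel₀ (C_natCast_add_ne_zero 0 two_pos)
      simp only [map_ofNat, Nat.cast_zero, zero_add] at hd ⊢
      linear_combination hd
    | n + 2, ih =>
      have h1 := ih (n + 1) (by omega)
      have h0 := ih n (by omega)
      have hd := congrArg derivative (C_mul_lag_add_two a (n + 1))
      simp only [derivative_mul, derivative_sub, derivative_C, derivative_X,
        zero_mul, zero_sub, one_mul, zero_add, neg_mul] at hd
      have r := C_mul_lag_add_two (a + 1) n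
      have s := lag_add_one_eq_sub a (n + 1)
      apply mul_left_cancel₀ (C_natCast_add_ne_zero n three_pos)
      push_cast at h1 h0 hd r s ⊢
      simp only [map_add, map_mul, map_one, map_ofNat] at h1 h0 hd r s ⊢
      linear_combination hd + (2 * C (n : ℝ) + 5 + C a - X) * h1 - (C (n : ℝ) + 2 + C a) * h0
        - s + r

lemma X_mul_derivative_lag_add (a : ℝ) (n : ℕ) :
    X * derivative (lag a n) + C a * lag a n = C ((n : ℝ) + a) * lag (a - 1) n := by
  cases n with
  | zero => simp [lag_zero]
  | succ n =>
    have x := X_mul_lag_add_one a n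
    have s := lag_add_one_eq_sub (a - 1) n
    rw [sub_add_cancel] at s
    rw [derivative_lag_add_one]
    simp only [map_add, map_one, map_natCast, Nat.cast_add, Nat.cast_one] at x s ⊢
    linear_combination -x - (C a + (n : ℝ[X]) + 1) * s

lemma cpow_natCast (n : ℕ) (z : ℂ) : cpow n z = z ^ n := by
  simp [cpow]

lemma cpow_one (z : ℂ) : cpow 1 z = z := by
  simp [cpow]

lemma cpow_neg_one (z : ℂ) : cpow (-1) z = conj z := by
  simp [cpow]

lemma conj_Lcal (s : ℕ) (m : ℤ) (z : ℂ) : conj (Lcal s m z) = Lcal s (-m) z := by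
  have hcpow : conj (cpow m z) = cpow (-m) z := by
    rcases lt_trichotomy m 0 with h | rfl | h
    · simp [cpow, h.not_ge, h.le]
    · simp [cpow]
    · simp [cpow, h.le, h]
  simp only [Lcal, Int.natAbs_neg, map_mul, map_pow, map_neg, map_one, map_natCast,
    Complex.conj_ofReal, hcpow]

lemma Lcal_zero_zero (z : ℂ) : Lcal 0 0 z = 1 := by
  simp [Lcal, cpow, lag_zero]

lemma Lcal_add_two_mul (α q : ℕ) (z : ℂ) :
    Lcal (α + 2 * q) α z
      = (-1) ^ q * (q.factorial : ℂ) * (((lag α q).eval (‖z‖ ^ 2) : ℝ) : ℂ) * z ^ α := by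
  have hq : (α + 2 * q - α) / 2 = q := by omega
  simp only [Lcal, Int.natAbs_natCast, hq, cpow_natCast]

-- The `∂_z̄` and `∂_z` derivatives of `𝓛(α + 2q, α, ·)`.
lemma natCast_mul_Lcal_add_one (α q : ℕ) (z : ℂ) :
    (q : ℂ) * Lcal (α + 2 * q - 1) (α + 1) z
      = (-1) ^ q * (q.factorial : ℂ) * (((derivative (lag α q)).eval (‖z‖ ^ 2) : ℝ) : ℂ)
        * z ^ (α + 1) := by
  cases q with
  | zero => simp [lag_zero]
  | succ q =>
    rw [show α + 2 * (q + 1) - 1 = (α + 1) + 2 * q by omega,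
      show (α : ℤ) + 1 = ((α + 1 : ℕ) : ℤ) by push_cast; ring, Lcal_add_two_mul,
      derivative_lag_add_one, eval_neg]
    push_cast [Nat.factorial_succ]
    ring

lemma natCast_add_mul_Lcal_sub_one (α q : ℕ) (z : ℂ) :
    ((q + α : ℕ) : ℂ) * Lcal (α + 2 * q - 1) (α - 1) z
      = (-1) ^ q * (q.factorial : ℂ) *
        ((((derivative (lag α q)).eval (‖z‖ ^ 2) : ℝ) : ℂ) * (conj z * z ^ α)
          + α * (((lag α q).eval (‖z‖ ^ 2) : ℝ) : ℂ) * z ^ (α - 1)) := by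
  cases α with
  | zero =>
    cases q with
    | zero => simp [lag_zero]
    | succ q =>
      rw [show 0 + 2 * (q + 1) - 1 = 1 + 2 * q by omega,
        show ((0 : ℕ) : ℤ) - 1 = -((1 : ℕ) : ℤ) by norm_num, ← conj_Lcal, Lcal_add_two_mul,
        derivative_lag_add_one, eval_neg]
      push_cast [Nat.factorial_succ]
      simp only [map_mul, map_pow, map_neg, map_one, map_natCast, Complex.conj_ofReal, zero_add]
      ring
  | succ α =>
    have h := congrArg (eval (‖z‖ ^ 2)) (X_mul_derivative_lag_add ((α + 1 : ℕ) : ℝ) q)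
    simp only [eval_add, eval_mul, eval_X, eval_C, Nat.cast_add, Nat.cast_one,
      add_sub_cancel_right] at h
    rw [show α + 1 + 2 * q - 1 = α + 2 * q by omega,
      show ((α + 1 : ℕ) : ℤ) - 1 = α by push_cast; ring, Lcal_add_two_mul, pow_succ' z α,
      ← mul_assoc (conj z), Complex.conj_mul', Nat.add_sub_cancel]
    have hC := congrArg (fun r : ℝ => (r : ℂ)) h
    push_cast at hC ⊢
    linear_combination -(-1) ^ q * (q.factorial : ℂ) * z ^ α * hC

section Deriv

variable {f : ℝ → ℂ} {f' : ℂ} {x : ℝ}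

lemma HasDerivAt.eval_norm_sq_mul_pow (P : ℝ[X]) (r : ℕ) (hf : HasDerivAt f f' x) :
    HasDerivAt (fun t => ((P.eval (‖f t‖ ^ 2) : ℝ) : ℂ) * f t ^ r)
      (((P.derivative.eval (‖f x‖ ^ 2) : ℝ) : ℂ) * (conj (f x) * f' + f x * conj f')
          * f x ^ r
        + ((P.eval (‖f x‖ ^ 2) : ℝ) : ℂ) * (r * f x ^ (r - 1) * f')) x := by
  have hP := ((P.hasDerivAt _).comp x hf.norm_sq).ofReal_comp
  refine (hP.mul (hf.fun_pow r)).congr_deriv ?_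
  have h := Complex.add_conj (f' * conj (f x))
  simp only [map_mul, Complex.conj_conj] at h
  simp only [Function.comp_apply, Complex.ofReal_mul, Complex.inner, ← h]
  ring

lemma hasDerivAt_Lcal_add_two_mul (α q : ℕ) (hf : HasDerivAt f f' x) :
    HasDerivAt (fun t => Lcal (α + 2 * q) α (f t))
      (((q + α : ℕ) : ℂ) * f' * Lcal (α + 2 * q - 1) (α - 1) (f x)
        + q * conj f' * Lcal (α + 2 * q - 1) (α + 1) (f x)) x := by
  have hF : (fun t => Lcal (α + 2 * q) α (f t)) = fun t => (-1) ^ q * (q.factorial : ℂ) *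
      ((((lag α q).eval (‖f t‖ ^ 2) : ℝ) : ℂ) * f t ^ α) := by
    funext t
    rw [Lcal_add_two_mul, mul_assoc]
  rw [hF]
  refine ((hf.eval_norm_sq_mul_pow (lag α q) α).const_mul _).congr_deriv ?_
  linear_combination -f' * natCast_add_mul_Lcal_sub_one α q (f x)
    - conj f' * natCast_mul_Lcal_add_one α q (f x)

lemma hasDerivAt_Lcal_add_sub (p q : ℕ) (hf : HasDerivAt f f' x) :
    HasDerivAt (fun t => Lcal (p + q) (p - q) (f t))
      (p * f' * Lcal (p + q - 1) (p - q - 1) (f x)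
        + q * conj f' * Lcal (p + q - 1) (p - q + 1) (f x)) x := by
  rcases le_total q p with hqp | hpq
  · obtain ⟨α, rfl⟩ := Nat.exists_eq_add_of_le hqp
    rw [show q + α + q = α + 2 * q by ring, show ((q + α : ℕ) : ℤ) - q = α by push_cast; ring]
    exact hasDerivAt_Lcal_add_two_mul α q hf
  · obtain ⟨α, rfl⟩ := Nat.exists_eq_add_of_le hpq
    have h := (hasDerivAt_Lcal_add_two_mul α p hf).star
    simp only [← starRingEnd_apply, conj_Lcal, map_add, map_mul, map_natCast,
      Complex.conj_conj] at h
    rw [show p + (p + α) = α + 2 * p by ring,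
      show (p : ℤ) - ((p + α : ℕ) : ℤ) = -α by push_cast; ring,
      show -(α : ℤ) - 1 = -(α + 1) by ring, show -(α : ℤ) + 1 = -(α - 1) by ring]
    exact h.congr_deriv (by push_cast; ring)

open Finset in
lemma hasDerivAt_Lcal_card_sum {J : Type*} (s : Finset J) {ι : J → ℤ}
    (hι : ∀ j ∈ s, ι j = 1 ∨ ι j = -1) (hf : HasDerivAt f f' x) :
    HasDerivAt (fun t => Lcal #s (∑ j ∈ s, ι j) (f t))
      (∑ j ∈ s, cpow (ι j) f' * Lcal (#s - 1) (∑ i ∈ s, ι i - ι j) (f x)) x := by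
  have hneg : ∀ j ∈ {j ∈ s | ¬ι j = 1}, ι j = -1 := fun j hj => by
    rw [mem_filter] at hj
    exact (hι j hj.1).resolve_left hj.2
  have hsum : ∑ j ∈ s, ι j = #{j ∈ s | ι j = 1} - #{j ∈ s | ¬ι j = 1} := by
    rw [← sum_filter_add_sum_filter_not s (ι · = 1),
      sum_congr rfl (fun j hj => (mem_filter.mp hj).2), sum_congr rfl hneg]
    simp [sub_eq_add_neg]
  have hterm : ∀ j ∈ s, cpow (ι j) f' * Lcal (#s - 1) (∑ i ∈ s, ι i - ι j) (f x)
      = if ι j = 1 then f' * Lcal (#s - 1) (∑ i ∈ s, ι i - 1) (f x)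
        else conj f' * Lcal (#s - 1) (∑ i ∈ s, ι i + 1) (f x) := fun j hj => by
    rcases hι j hj with h | h <;> simp [h, cpow_one, cpow_neg_one, sub_neg_eq_add]
  rw [sum_congr rfl hterm, sum_ite, sum_const, sum_const, hsum,
    ← card_filter_add_card_filter_not (s := s) (fun j => ι j = 1)]
  refine (hasDerivAt_Lcal_add_sub _ _ hf).congr_deriv ?_
  simp only [nsmul_eq_mul]
  ring

end Deriv

section Lprod

open Finset

variable {V J : Type*} [Fintype J] [DecidableEq V]

lemma Lprod_eq_prod_of_subset (nJ : J → V) (ι : J → ℤ) (g : V → ℂ) {T : Finset V}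
    (hT : univ.image nJ ⊆ T) :
    Lprod nJ ι g = ∏ n ∈ T, Lcal #{j | nJ j = n} (∑ j with nJ j = n, ι j) (g n) := by
  refine prod_subset hT fun n _ hn => ?_
  have hfiber : ({j | nJ j = n} : Finset J) = ∅ :=
    filter_eq_empty_iff.mpr fun j _ hj => hn (mem_image.mpr ⟨j, mem_univ j, hj⟩)
  rw [hfiber, card_empty, sum_empty, Lcal_zero_zero]

lemma map_filter_subtype_ne [DecidableEq J] (j : J) (p : J → Prop) [DecidablePred p] :
    ({i : {i // i ≠ j} | p i} : Finset _).map (Function.Embedding.subtype _)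
      = ({i | p i} : Finset J).erase j := by
  ext i
  simp [and_comm]

lemma Lprod_subtype_ne [DecidableEq J] (nJ : J → V) (ι : J → ℤ) (g : V → ℂ) (j : J) :
    Lprod (fun i : {i // i ≠ j} => nJ i) (fun i => ι i) g
      = Lcal (#{i | nJ i = nJ j} - 1) (∑ i with nJ i = nJ j, ι i - ι j) (g (nJ j))
        * ∏ n ∈ (univ.image nJ).erase (nJ j),
            Lcal #{i | nJ i = n} (∑ i with nJ i = n, ι i) (g n) := by
  have hsub : univ.image (fun i : {i // i ≠ j} => nJ i) ⊆ univ.image nJ :=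
    fun n hn => by
      obtain ⟨i, -, rfl⟩ := mem_image.mp hn
      exact mem_image_of_mem nJ (mem_univ _)
  have hfiber (n : V) :
      Lcal (#{i : {i // i ≠ j} | nJ i = n}) (∑ i ∈ {i : {i // i ≠ j} | nJ i = n}, ι i) (g n)
      = Lcal #(({i | nJ i = n} : Finset J).erase j)
          (∑ i ∈ ({i | nJ i = n} : Finset J).erase j, ι i) (g n) := by
    rw [← map_filter_subtype_ne j (nJ · = n), card_map, sum_map]
    rfl
  rw [Lprod_eq_prod_of_subset _ _ _ hsub, ← mul_prod_erase _ _ (mem_image_of_mem nJ (mem_univ j))]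
  simp only [hfiber]
  congr 1
  · rw [card_erase_of_mem (by simp), sum_erase_eq_sub (by simp)]
  · refine prod_congr rfl fun n hn => ?_
    rw [erase_eq_of_notMem (by simpa [eq_comm] using (mem_erase.mp hn).1)]

theorem hasDerivAt_Lprod [DecidableEq J] (nJ : J → V) {ι : J → ℤ}
    (hι : ∀ j, ι j = 1 ∨ ι j = -1) {G : ℝ → V → ℂ} {G' : V → ℂ} {x : ℝ}
    (hG : ∀ n, HasDerivAt (fun t => G t n) (G' n) x) :
    HasDerivAt (fun t => Lprod nJ ι (G t))
      (∑ j, cpow (ι j) (G' (nJ j)) * Lprod (fun i : {i // i ≠ j} => nJ i) (fun i => ι i) (G x))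
      x := by
  have h := HasDerivAt.fun_finsetProd (u := univ.image nJ) fun n _ =>
    hasDerivAt_Lcal_card_sum {j | nJ j = n} (fun j _ => hι j) (hG n)
  refine h.congr_deriv ?_
  rw [← sum_fiberwise_of_maps_to (g := nJ) (t := univ.image nJ)
    (fun j _ => mem_image_of_mem nJ (mem_univ j))]
  refine sum_congr rfl fun n _ => ?_
  rw [smul_eq_mul, mul_sum]
  refine sum_congr rfl fun j hj => ?_
  obtain rfl := (mem_filter.mp hj).2
  rw [Lprod_subtype_ne]
  ring

end Lprod

/-- **Derivative of the interpolated Laguerre-type renormalized product.** With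
`g_n(φ) = sin(φ) gₙ + cos(φ) g̃ₙ`, one has
`∂_φ 𝓛(g_{n_J}^{ι_J}(φ)) = ∑_j ∂_φ[g_{n_j}^{ι_j}(φ)] 𝓛(g_{n_{J∖j}}^{ι_{J∖j}}(φ))`. -/
theorem Lprod_hasDerivAt {d k : ℕ} (nJ : Fin k → Fin d → ℤ) (ι : Fin k → ℤ)
    (hι : ∀ j, ι j = 1 ∨ ι j = -1) (g g' : (Fin d → ℤ) → ℂ) (φ : ℝ) :
    HasDerivAt
      (fun φ : ℝ => Lprod nJ ι
        (fun n => (Real.sin φ : ℂ) * g n + (Real.cos φ : ℂ) * g' n))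
      (∑ j : Fin k,
        cpow (ι j) ((Real.cos φ : ℂ) * g (nJ j) - (Real.sin φ : ℂ) * g' (nJ j)) *
          Lprod (fun i : {i : Fin k // i ≠ j} => nJ i) (fun i : {i : Fin k // i ≠ j} => ι i)
            (fun n => (Real.sin φ : ℂ) * g n + (Real.cos φ : ℂ) * g' n))
      φ := by
  have hG (n : Fin d → ℤ) :
      HasDerivAt (fun t : ℝ => (Real.sin t : ℂ) * g n + (Real.cos t : ℂ) * g' n)
        ((Real.cos φ : ℂ) * g n - (Real.sin φ : ℂ) * g' n) φ := by
    have hsin := (Real.hasDerivAt_sin φ).ofReal_comp.mul_const (g n)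
    have hcos := (Real.hasDerivAt_cos φ).ofReal_comp.mul_const (g' n)
    exact (hsin.fun_add hcos).congr_deriv (by push_cast; ring)
  exact (hasDerivAt_Lprod nJ hι hG :)
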